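/- Let μ = μ_{R,B} be the self-affine measure for R = [[2,1],[0,2]] and B = {(0,0),(1,0)}, and let Λ ⊆ ℝ² with 0 ∈ Λ. Then Λ is an orthogonal set of μ if and only if there exist a subset A ⊆ ℤ with 0 ∈ A and a function β : A → ℝ with β(0) = 0 such that Λ = {(n, β(n)) : n ∈ A}; equivalently, if and only if every point of Λ has integer first coordinate and distinct points of Λ have distinct first coordinates. -/

import Mathlib

open MeasureTheory Filter Set Metric
open scoped ENNReal

noncomputable section

/-- The plane with the Euclidean metric. -/
abbrev Plane : Type := EuclideanSpace ℝ (Fin 2)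

/-- The point `(a, b)` of the Euclidean plane. -/
def pt (a b : ℝ) : Plane := WithLp.toLp 2 ![a, b]

/-- The self-affine measure `μ_{R,B}` for `R = [[2,1],[0,2]]`, `B = {(0,0),(1,0)}`:
the pushforward of Lebesgue measure on `[0,1]` under `x ↦ (x, 0)`. -/
def muRB : Measure Plane :=
  Measure.map (fun x : ℝ => pt x 0) (volume.restrict (Set.Icc (0:ℝ) 1))

instance : IsProbabilityMeasure (volume.restrict (Set.Icc (0:ℝ) 1)) :=
  ⟨by simp [Real.volume_Icc]⟩

lemma measurable_pt0 : Measurable (fun x : ℝ => pt x 0) := by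
  unfold pt
  apply Continuous.measurable
  exact (PiLp.continuous_toLp 2 _).comp
    (continuous_pi fun i => by fin_cases i <;> simp <;> fun_prop)

instance : IsProbabilityMeasure muRB :=
  Measure.isProbabilityMeasure_map measurable_pt0.aemeasurable

/-- The Fourier transform `μ̂(ξ) = ∫ e^{-2πi⟨ξ,x⟩} dμ(x)` of a measure on the plane. -/
def fourierTransform (μ : Measure Plane) (ξ : Plane) : ℂ :=
  ∫ x, Complex.exp ((-(2 * Real.pi * (inner ℝ ξ x : ℝ)) : ℝ) * Complex.I) ∂μ

/-- The exponential function `e_λ(x) = e^{-2πi⟨λ,x⟩}`. -/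
def expFn (lam : Plane) : Plane → ℂ :=
  fun x => Complex.exp ((-(2 * Real.pi * (inner ℝ lam x : ℝ)) : ℝ) * Complex.I)

lemma expFn_memLp (μ : Measure Plane) [IsFiniteMeasure μ] (lam : Plane) :
    MemLp (expFn lam) 2 μ := by
  refine MemLp.of_bound ?_ 1 ?_
  · apply Continuous.aestronglyMeasurable
    unfold expFn
    have h1 : Continuous fun x : Plane => (inner ℝ lam x : ℝ) :=
      continuous_const.inner continuous_id
    exact Complex.continuous_exp.comp
      ((Complex.continuous_ofReal.comp ((continuous_const.mul h1).neg)).mul continuous_const)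
  · refine Eventually.of_forall fun x => ?_
    unfold expFn
    rw [Complex.norm_exp_ofReal_mul_I]

/-- The exponential `e_λ` as an element of `L²(μ)`. -/
def expLp (μ : Measure Plane) [IsFiniteMeasure μ] (lam : Plane) : Lp ℂ 2 μ :=
  (expFn_memLp μ lam).toLp _

/-- `Λ` is an orthogonal set of `μ`: the exponentials `{e_λ : λ ∈ Λ}` form an
orthonormal family in `L²(μ)`. -/
def IsOrthogonalSet (μ : Measure Plane) [IsFiniteMeasure μ] (Λ : Set Plane) : Prop :=
  Orthonormal ℂ (fun lam : Λ => expLp μ lam)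

/-- `Λ` is a spectrum of `μ`: the exponentials `{e_λ : λ ∈ Λ}` form an
orthonormal basis of `L²(μ)`. -/
def IsSpectrum (μ : Measure Plane) [IsFiniteMeasure μ] (Λ : Set Plane) : Prop :=
  Orthonormal ℂ (fun lam : Λ => expLp μ lam) ∧
    (Submodule.span ℂ (Set.range (fun lam : Λ => expLp μ lam))).topologicalClosure = ⊤

/-- The upper `r`-Beurling density
`D_r^+(Λ) = limsup_{h→∞} sup_{x} #(Λ ∩ B(x,h)) / h^r`. -/
def beurlingDensity (r : ℝ) (Λ : Set Plane) : ℝ≥0∞ :=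
  limsup (fun h : ℝ =>
    ⨆ x : Plane, ((Λ ∩ Metric.ball x h).encard : ℝ≥0∞) / ENNReal.ofReal (h ^ r)) atTop

/-- The upper `r`-density (centered at the origin)
`B_r^+(Λ) = limsup_{h→∞} #(Λ ∩ B(0,h)) / h^r`. -/
def upperDensity (r : ℝ) (Λ : Set Plane) : ℝ≥0∞ :=
  limsup (fun h : ℝ =>
    ((Λ ∩ Metric.ball (0 : Plane) h).encard : ℝ≥0∞) / ENNReal.ofReal (h ^ r)) atTop

/-- The Beurling dimension `dim_Be(Λ) = sup {r > 0 : D_r^+(Λ) = ∞}`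
(equal to `0` when the set is empty, by the convention `sSup ∅ = 0` in `ℝ`). -/
def beurlingDim (Λ : Set Plane) : ℝ :=
  sSup {r : ℝ | 0 < r ∧ beurlingDensity r Λ = ⊤}

/-- The Banach dimension `dim_Ba(Λ) = sup {r > 0 : B_r^+(Λ) = ∞}`. -/
def banachDim (Λ : Set Plane) : ℝ :=
  sSup {r : ℝ | 0 < r ∧ upperDensity r Λ = ⊤}

/-- The sign of an integer, as a real number. -/
def isgn (n : ℤ) : ℝ := (Int.sign n : ℝ)

end

/-!
`μ_{R,B}` is Lebesgue measure on the horizontal unit segment, so its Fourier transform is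
`μ̂(ξ) = ∫₀¹ e^{-2πi ξ₁ x} dx`, which vanishes exactly when `ξ₁ ∈ ℤ ∖ {0}`. Since
`⟪e_λ, e_λ'⟫ = μ̂(λ' - λ)`, a set `Λ` is orthogonal iff distinct points of `Λ` have distinct first
coordinates differing by integers. When `0 ∈ Λ` this says the first coordinates are integers and
determine the point, i.e. `Λ` is the graph of a function on a set of integers.
-/

open Complex
open scoped Real

lemma pt_eta (p : Plane) : pt (p 0) (p 1) = p := by
  ext i; fin_cases i <;> rfl

lemma inner_pt_zero (v : Plane) (x : ℝ) : (inner ℝ v (pt x 0) : ℝ) = v 0 * x := by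
  simp [PiLp.inner_apply, Fin.sum_univ_two, pt, mul_comm]

lemma continuous_expFn (lam : Plane) : Continuous (expFn lam) := by
  unfold expFn
  fun_prop

lemma inner_expLp (μ : Measure Plane) [IsFiniteMeasure μ] (lam lam' : Plane) :
    inner ℂ (expLp μ lam) (expLp μ lam') = fourierTransform μ (lam' - lam) := by
  rw [L2.inner_def, fourierTransform]
  refine integral_congr_ae ?_
  filter_upwards [(expFn_memLp μ lam).coeFn_toLp, (expFn_memLp μ lam').coeFn_toLp] with x h h'
  rw [expLp, expLp, h, h', RCLike.inner_apply, expFn, expFn, ← exp_conj, ← exp_add,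
    map_mul, conj_I, conj_ofReal, inner_sub_left]
  push_cast
  ring_nf

lemma fourierTransform_zero (μ : Measure Plane) [IsProbabilityMeasure μ] :
    fourierTransform μ 0 = 1 := by
  simp [fourierTransform]

lemma isOrthogonalSet_iff_pairwise (μ : Measure Plane) [IsProbabilityMeasure μ]
    (Λ : Set Plane) :
    IsOrthogonalSet μ Λ ↔ Λ.Pairwise fun p q => fourierTransform μ (q - p) = 0 := by
  classical
  rw [IsOrthogonalSet, orthonormal_iff_ite]
  constructor
  · intro h p hp q hq hpq
    simpa [inner_expLp, hpq] using h ⟨p, hp⟩ ⟨q, hq⟩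
  · rintro h ⟨p, hp⟩ ⟨q, hq⟩
    by_cases hpq : p = q
    · subst hpq
      rw [if_pos rfl, inner_expLp, sub_self, fourierTransform_zero]
    · simpa [inner_expLp, hpq] using h hp hq hpq

lemma fourierTransform_muRB (ξ : Plane) :
    fourierTransform muRB ξ =
      ∫ x in (0 : ℝ)..1, exp (((-(2 * π * (ξ 0 * x))) : ℝ) * I) := by
  rw [show fourierTransform muRB ξ = ∫ x, expFn ξ x ∂muRB from rfl, muRB,
    integral_map measurable_pt0.aemeasurable (continuous_expFn ξ).aestronglyMeasurable,
    integral_Icc_eq_integral_Ioc,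
    ← intervalIntegral.integral_of_le zero_le_one]
  simp only [expFn, inner_pt_zero]

lemma integral_exp_eq_zero_iff (a : ℝ) :
    ∫ x in (0 : ℝ)..1, exp (((-(2 * π * (a * x))) : ℝ) * I) = 0 ↔
      a ≠ 0 ∧ ∃ n : ℤ, a = n := by
  rcases eq_or_ne a 0 with rfl | ha
  · simp
  have hc : ((-(2 * π * a) : ℝ) : ℂ) * I ≠ 0 := by simp [Real.pi_ne_zero, ha]
  have hint : ∀ x : ℝ, exp (((-(2 * π * (a * x))) : ℝ) * I) =
      exp (((-(2 * π * a) : ℝ) : ℂ) * I * x) := fun x => by push_cast; ring_nf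
  simp only [hint, integral_exp_mul_complex hc, div_eq_zero_iff, hc, or_false, sub_eq_zero,
    ofReal_one, ofReal_zero, mul_one, mul_zero, Complex.exp_zero, exp_eq_one_iff, ne_eq, ha,
    not_false_eq_true, true_and]
  constructor
  · rintro ⟨n, hn⟩
    refine ⟨-n, ?_⟩
    have : ((-(2 * π * a) : ℝ) : ℂ) = ((2 * π * n : ℝ) : ℂ) := by
      apply mul_right_cancel₀ I_ne_zero; rw [hn]; push_cast; ring
    exact mul_left_cancel₀ Real.two_pi_pos.ne' (by push_cast; linarith [ofReal_injective this])
  · rintro ⟨n, rfl⟩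
    exact ⟨-n, by push_cast; ring⟩

lemma isOrthogonalSet_muRB_iff_pairwise (Λ : Set Plane) :
    IsOrthogonalSet muRB Λ ↔ Λ.Pairwise fun p q => q 0 ≠ p 0 ∧ ∃ n : ℤ, q 0 - p 0 = n := by
  simp only [isOrthogonalSet_iff_pairwise, fourierTransform_muRB, integral_exp_eq_zero_iff,
    PiLp.sub_apply, sub_ne_zero]

lemma pairwise_ne_and_sub_mem_int_iff {α : Type*} {s : Set α} {f : α → ℝ} {a : α}
    (ha : a ∈ s) (hfa : f a = 0) :
    (s.Pairwise fun p q => f q ≠ f p ∧ ∃ n : ℤ, f q - f p = n) ↔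
      (∀ p ∈ s, ∃ n : ℤ, f p = n) ∧ InjOn f s := by
  constructor
  · intro h
    refine ⟨fun p hp => ?_, fun p hp q hq hpq => by_contra fun hne => (h hp hq hne).1 hpq.symm⟩
    rcases eq_or_ne a p with rfl | hap
    · exact ⟨0, by simp [hfa]⟩
    · obtain ⟨-, n, hn⟩ := h ha hp hap
      exact ⟨n, by simpa [hfa] using hn⟩
  · rintro ⟨hint, hinj⟩ p hp q hq hpq
    obtain ⟨m, hm⟩ := hint p hp
    obtain ⟨n, hn⟩ := hint q hq
    exact ⟨fun h => hpq (hinj hp hq h.symm), n - m, by rw [hm, hn]; push_cast; ring⟩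

lemma exists_eq_image_graph_iff {Λ : Set Plane} (h0 : (0 : Plane) ∈ Λ) :
    (∃ (A : Set ℤ) (β : ℤ → ℝ), 0 ∈ A ∧ β 0 = 0 ∧
        Λ = (fun n : ℤ => pt (n : ℝ) (β n)) '' A) ↔
      (∀ p ∈ Λ, ∃ n : ℤ, p 0 = n) ∧ InjOn (fun p : Plane => p 0) Λ := by
  constructor
  · rintro ⟨A, β, -, -, rfl⟩
    refine ⟨fun _ ⟨n, _, hn⟩ => ⟨n, hn ▸ rfl⟩, ?_⟩
    rintro _ ⟨n, -, rfl⟩ _ ⟨m, -, rfl⟩ h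
    rw [Int.cast_injective (α := ℝ) h]
  · rintro ⟨hint, hinj⟩
    -- `β n` is the second coordinate of the unique point of `Λ` above `n`
    set g := Function.invFunOn (fun p : Plane => p 0) Λ
    have hg : ∀ p ∈ Λ, g (p 0) = p := fun p hp => hinj.leftInvOn_invFunOn hp
    refine ⟨{n | ∃ p ∈ Λ, p 0 = n}, fun n => g n 1, ⟨0, h0, by simp⟩, ?_, ?_⟩
    · simpa using congr_arg (· 1) (hg 0 h0)
    · ext p
      refine ⟨fun hp => ?_, ?_⟩
      · obtain ⟨n, hn⟩ := hint p hp
        refine ⟨n, ⟨p, hp, hn⟩, ?_⟩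
        show pt n (g n 1) = p
        rw [← hn, hg p hp, pt_eta]
      · rintro ⟨n, ⟨q, hq, hqn⟩, rfl⟩
        show pt n (g n 1) ∈ Λ
        rw [← hqn, hg q hq, pt_eta]
        exact hq

/-- A set `Λ ∋ 0` is an orthogonal set of `μ_{R,B}` iff it is of the form
`{(n, β(n)) : n ∈ A}` for some `A ⊆ ℤ` with `0 ∈ A` and `β : ℤ → ℝ` with `β 0 = 0`;
equivalently, iff every point of `Λ` has integer first coordinate and distinct points of
`Λ` have distinct first coordinates. -/
theorem isOrthogonalSet_muRB_iff (Λ : Set Plane) (h0 : (0 : Plane) ∈ Λ) :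
    (IsOrthogonalSet muRB Λ ↔
      ∃ (A : Set ℤ) (β : ℤ → ℝ), 0 ∈ A ∧ β 0 = 0 ∧
        Λ = (fun n : ℤ => pt (n : ℝ) (β n)) '' A) ∧
    (IsOrthogonalSet muRB Λ ↔
      (∀ p ∈ Λ, ∃ n : ℤ, p 0 = (n : ℝ)) ∧
        ∀ p ∈ Λ, ∀ q ∈ Λ, p 0 = q 0 → p = q) := by
  have h := (isOrthogonalSet_muRB_iff_pairwise Λ).trans
    (pairwise_ne_and_sub_mem_int_iff (f := fun p : Plane => p 0) h0 rfl)
  exact ⟨h.trans (exists_eq_image_graph_iff h0).symm, h⟩
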